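/- arXiv:2510.08336 — 5 statements merged into one kernel-verified Lean document; each statement's English description precedes it below -/
import Mathlib

section
/- Let S ⊆ Ω ⊆ ℝⁿ be finite sets with 0 ∉ aff(Ω), and let d = dim aff(Ω). Then there exists a finite set H ⊆ ℝⁿ such that conv(S) = ⋂_{h ∈ H} {p ∈ aff(Ω) : ⟨p, h⟩ ≥ 0}, and for each h ∈ H there exist d affinely independent elements ω₁,…,ω_d ∈ Ω with ⟨ωᵢ, h⟩ = 0 for all i. -/
/-!
Since `0 ∉ aff Ω`, some `u` satisfies `x ⬝ᵥ u = 1` on `aff Ω`, so a hyperplane separating a point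
`p ∈ aff Ω` from `conv S` can be moved through the origin: it becomes a vector `h` with
`0 ≤ s ⬝ᵥ h` on `S` and `p ⬝ᵥ h < 0`. Such an `h` can be tilted to `h + t g`, with `g` orthogonal
to `p` and to the points of `Ω ∩ h⊥`, until one more point of `Ω` reaches `h⊥`. When no tilt is
possible, `Ω ∩ h⊥` spans a hyperplane of `span Ω`, which has dimension `d + 1`. That hyperplane
determines `h` on `span Ω` up to a nonzero factor, so `h` may be replaced by one of the finitely
many normals `±normalOf Ω T` fixed in advance for `T ⊆ Ω`, and `d` linearly independent points
of `Ω ∩ h⊥` are the required affinely independent ones.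
-/

open Module Submodule Set

section LinearAlgebra

variable {K M : Type*} [Field K] [AddCommGroup M] [Module K M]

theorem finrank_span_eq_finrank_direction_add_one [FiniteDimensional K M] {s : Set M}
    (hs : s.Nonempty) (h0 : (0 : M) ∉ affineSpan K s) :
    finrank K (span K s) = finrank K (affineSpan K s).direction + 1 := by
  obtain ⟨q, hq⟩ := hs
  have hqA : q ∈ affineSpan K s := subset_affineSpan K s hq
  have hqD : q ∉ (affineSpan K s).direction := fun hqD => h0 <| by
    simpa using AffineSubspace.vadd_mem_of_mem_direction (neg_mem hqD) hqA
  suffices span K s = (affineSpan K s).direction ⊔ K ∙ q by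
    rw [this, Submodule.finrank_sup_span_singleton hqD]
  refine le_antisymm (span_le.2 fun ω hω => ?_)
    (sup_le ?_ ((span_singleton_le_iff_mem _ _).2 (subset_span hq)))
  · rw [SetLike.mem_coe, ← sub_add_cancel ω q]
    exact add_mem (mem_sup_left (AffineSubspace.vsub_mem_direction (subset_affineSpan K s hω) hqA))
      (mem_sup_right (mem_span_singleton_self q))
  · rw [direction_affineSpan, vectorSpan_def, span_le]
    rintro _ ⟨a, ha, b, hb, rfl⟩
    exact sub_mem (subset_span ha) (subset_span hb)

theorem exists_linearIndependent_fin_of_le_finrank_span {s : Set M} (hs : s.Finite) {d : ℕ}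
    (hd : d ≤ finrank K (span K s)) : ∃ v : Fin d → M, (∀ i, v i ∈ s) ∧ LinearIndependent K v := by
  obtain ⟨B, hBs, hspan, hB⟩ := exists_linearIndependent K s
  have := (hs.subset hBs).fintype
  obtain ⟨e⟩ : Nonempty (Fin d ↪ B) := Function.Embedding.nonempty_of_card_le <| by
    rwa [Fintype.card_fin, ← Set.toFinset_card, ← finrank_span_set_eq_card hB, hspan]
  exact ⟨fun i => e i, fun i => hBs (e i).2, hB.comp e e.injective⟩

end LinearAlgebra

section DotProduct

variable {𝕜 ι : Type*} [Field 𝕜] [Fintype ι]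

theorem dotProduct_dotProductEquiv_symm [DecidableEq ι] (f : Dual 𝕜 (ι → 𝕜)) (x : ι → 𝕜) :
    x ⬝ᵥ (dotProductEquiv 𝕜 ι).symm f = f x := by
  rw [dotProduct_comm, ← dotProductEquiv_apply_apply, LinearEquiv.apply_symm_apply]

theorem dotProduct_eq_zero_of_mem_span {s : Set (ι → 𝕜)} {h : ι → 𝕜} (hs : ∀ x ∈ s, x ⬝ᵥ h = 0)
    {y : ι → 𝕜} (hy : y ∈ span 𝕜 s) : y ⬝ᵥ h = 0 := by
  induction hy using Submodule.span_induction with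
  | mem x hx => exact hs x hx
  | zero => exact zero_dotProduct h
  | add x y _ _ hx hy => rw [add_dotProduct, hx, hy, add_zero]
  | smul c x _ hx => rw [smul_dotProduct, hx, smul_zero]

theorem exists_dotProduct_eq_zero_ne_zero {W : Submodule 𝕜 (ι → 𝕜)} {v : ι → 𝕜} (hv : v ∉ W) :
    ∃ g : ι → 𝕜, (∀ w ∈ W, w ⬝ᵥ g = 0) ∧ v ⬝ᵥ g ≠ 0 := by
  classical
  obtain ⟨f, hfv, hfW⟩ := W.exists_dual_map_eq_bot_of_notMem hv inferInstance
  refine ⟨(dotProductEquiv 𝕜 ι).symm f, fun w hw => ?_, by rwa [dotProduct_dotProductEquiv_symm]⟩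
  rw [dotProduct_dotProductEquiv_symm, ← mem_bot 𝕜, ← hfW]
  exact mem_map_of_mem hw

theorem AffineSubspace.exists_dotProduct_eq_one {A : AffineSubspace 𝕜 (ι → 𝕜)} (h0 : 0 ∉ A) :
    ∃ u : ι → 𝕜, ∀ x ∈ A, x ⬝ᵥ u = 1 := by
  obtain hA | ⟨q, hq⟩ := (A : Set (ι → 𝕜)).eq_empty_or_nonempty
  · exact ⟨0, fun x hx => (hA.subset hx).elim⟩
  have hqD : q ∉ A.direction := fun hqD => h0 <| by
    simpa using AffineSubspace.vadd_mem_of_mem_direction (neg_mem hqD) hq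
  obtain ⟨g, hgD, hqg⟩ := exists_dotProduct_eq_zero_ne_zero hqD
  refine ⟨(q ⬝ᵥ g)⁻¹ • g, fun x hx => ?_⟩
  have hxq := hgD _ (AffineSubspace.vsub_mem_direction hx hq)
  rw [vsub_eq_sub, sub_dotProduct, sub_eq_zero] at hxq
  rw [dotProduct_smul, smul_eq_mul, hxq, inv_mul_cancel₀ hqg]

theorem exists_dotProduct_eq_mul_of_finrank_eq_succ {W V : Submodule 𝕜 (ι → 𝕜)} (hWV : W ≤ V)
    (hV : finrank 𝕜 V = finrank 𝕜 W + 1) {h g : ι → 𝕜} (hh : ∀ w ∈ W, w ⬝ᵥ h = 0)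
    (hg : ∀ w ∈ W, w ⬝ᵥ g = 0) {v : ι → 𝕜} (hvV : v ∈ V) (hvg : v ⬝ᵥ g ≠ 0) :
    ∃ μ : 𝕜, ∀ x ∈ V, x ⬝ᵥ h = μ * (x ⬝ᵥ g) := by
  have hvW : v ∉ W := fun hvW => hvg (hg v hvW)
  have hWv : W ⊔ 𝕜 ∙ v = V := eq_of_le_of_finrank_le
    (sup_le hWV ((span_singleton_le_iff_mem _ _).2 hvV))
    (by rw [Submodule.finrank_sup_span_singleton hvW, hV])
  refine ⟨(v ⬝ᵥ h) / (v ⬝ᵥ g), fun x hx => ?_⟩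
  rw [← hWv] at hx
  obtain ⟨w, hw, _, hc, rfl⟩ := mem_sup.1 hx
  obtain ⟨c, rfl⟩ := mem_span_singleton.1 hc
  simp only [add_dotProduct, smul_dotProduct, hh w hw, hg w hw, smul_eq_mul, zero_add]
  field_simp

noncomputable def normalOf (Ω T : Set (ι → 𝕜)) : ι → 𝕜 :=
  Classical.epsilon fun g => (∀ x ∈ T, x ⬝ᵥ g = 0) ∧ ∃ ω ∈ Ω, ω ⬝ᵥ g ≠ 0

theorem normalOf_spec {Ω T : Set (ι → 𝕜)} {h : ι → 𝕜} (hT : ∀ x ∈ T, x ⬝ᵥ h = 0)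
    (hΩ : ∃ ω ∈ Ω, ω ⬝ᵥ h ≠ 0) :
    (∀ x ∈ T, x ⬝ᵥ normalOf Ω T = 0) ∧ ∃ ω ∈ Ω, ω ⬝ᵥ normalOf Ω T ≠ 0 :=
  Classical.epsilon_spec (p := fun g => (∀ x ∈ T, x ⬝ᵥ g = 0) ∧ ∃ ω ∈ Ω, ω ⬝ᵥ g ≠ 0) ⟨h, hT, hΩ⟩

def normals (Ω : Set (ι → 𝕜)) : Set (ι → 𝕜) :=
  ⋃ T ⊆ Ω, {normalOf Ω T, -normalOf Ω T}

theorem Set.Finite.normals {Ω : Set (ι → 𝕜)} (hΩ : Ω.Finite) : (normals Ω).Finite :=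
  hΩ.finite_subsets.biUnion fun _ _ => toFinite _

end DotProduct

section Separation

variable {𝕜 ι : Type*} [Field 𝕜] [LinearOrder 𝕜] [IsStrictOrderedRing 𝕜] [Fintype ι]
  {S Ω : Set (ι → 𝕜)} {p : ι → 𝕜}

theorem Finset.exists_first_zero_of_ne_zero {α : Type*} (T : Finset α) (a b : α → 𝕜)
    (hT : ∃ i ∈ T, a i ≠ 0 ∧ b i ≠ 0) :
    ∃ t : 𝕜, ∃ i ∈ T, b i ≠ 0 ∧ a i + t * b i = 0 ∧ ∀ j ∈ T, 0 < a j → 0 ≤ a j + t * b j := by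
  wlog hab : ∃ i ∈ T, a i * b i < 0 generalizing b
  · obtain ⟨i, hi, hai, hbi⟩ := hT
    have hab' : a i * (-b) i < 0 := by
      rw [Pi.neg_apply, mul_neg, neg_lt_zero]
      exact (not_lt.1 fun h => hab ⟨i, hi, h⟩).lt_of_ne' (mul_ne_zero hai hbi)
    obtain ⟨t, j, hj, hbj, htj, hpos⟩ := this (-b) ⟨i, hi, hai, neg_ne_zero.2 hbi⟩ ⟨i, hi, hab'⟩
    refine ⟨-t, j, hj, neg_ne_zero.1 hbj, by simpa using htj, fun k hk hak => ?_⟩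
    simpa using hpos k hk hak
  obtain ⟨i, hi, hmin⟩ := (T.filter fun i => a i * b i < 0).exists_min_image (fun i => -a i / b i)
    (by simpa [Finset.Nonempty] using hab)
  rw [Finset.mem_filter] at hi
  have hbi : b i ≠ 0 := fun h => by simp [h] at hi
  have ht : 0 < -a i / b i := by
    rw [show -a i / b i = -(a i * b i) / (b i * b i) by field_simp]
    exact div_pos (neg_pos.2 hi.2) (mul_self_pos.2 hbi)
  refine ⟨-a i / b i, i, hi.1, hbi, by field_simp; ring, fun j hj haj => ?_⟩
  obtain hbj | hbj := le_or_gt 0 (b j)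
  · exact add_nonneg haj.le (mul_nonneg ht.le hbj)
  · have := hmin j (Finset.mem_filter.2 ⟨hj, mul_neg_of_pos_of_neg haj hbj⟩)
    rw [le_div_iff_of_neg hbj] at this
    linarith

def Separates (S : Set (ι → 𝕜)) (p h : ι → 𝕜) : Prop :=
  (∀ s ∈ S, 0 ≤ s ⬝ᵥ h) ∧ p ⬝ᵥ h < 0

theorem Separates.exists_span_lt {h : ι → 𝕜} (hh : Separates S p h) (hS : S.Finite)
    (hSΩ : S ⊆ Ω) {ω₀ : ι → 𝕜} (hω₀ : ω₀ ∈ Ω)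
    (hω₀W : ω₀ ∉ span 𝕜 {ω ∈ Ω | ω ⬝ᵥ h = 0} ⊔ 𝕜 ∙ p) :
    ∃ h', Separates S p h' ∧ span 𝕜 {ω ∈ Ω | ω ⬝ᵥ h = 0} < span 𝕜 {ω ∈ Ω | ω ⬝ᵥ h' = 0} := by
  set W := span 𝕜 {ω ∈ Ω | ω ⬝ᵥ h = 0}
  have hZW : ∀ ω ∈ Ω, ω ⬝ᵥ h = 0 → ω ∈ W := fun ω hω h0 => subset_span ⟨hω, h0⟩
  obtain ⟨g, hgU, hω₀g⟩ := exists_dotProduct_eq_zero_ne_zero hω₀W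
  have hgW : ∀ w ∈ W, w ⬝ᵥ g = 0 := fun w hw => hgU w (mem_sup_left hw)
  have hω₀h : ω₀ ⬝ᵥ h ≠ 0 := fun h0 => hω₀W (mem_sup_left (hZW ω₀ hω₀ h0))
  -- tilt `h` towards `g` until the first point of `S ∪ {ω₀}` hits the hyperplane
  obtain ⟨t, x, hx, hxg, hxt, hSt⟩ := (insert ω₀ hS.toFinset).exists_first_zero_of_ne_zero
    (· ⬝ᵥ h) (· ⬝ᵥ g) ⟨ω₀, Finset.mem_insert_self _ _, hω₀h, hω₀g⟩
  have htilt : ∀ y, y ⬝ᵥ (h + t • g) = y ⬝ᵥ h + t * (y ⬝ᵥ g) := fun y => by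
    rw [dotProduct_add, dotProduct_smul, smul_eq_mul]
  have hxΩ : x ∈ Ω := by
    rcases Finset.mem_insert.1 hx with rfl | hxS
    exacts [hω₀, hSΩ (hS.mem_toFinset.1 hxS)]
  refine ⟨h + t • g, ⟨fun s hs => ?_, ?_⟩, lt_of_le_of_ne (span_mono fun ω hω => ⟨hω.1, ?_⟩) ?_⟩
  · rw [htilt]
    obtain hs0 | hs0 := (hh.1 s hs).lt_or_eq
    · exact hSt s (Finset.mem_insert_of_mem (hS.mem_toFinset.2 hs)) hs0
    · rw [← hs0, hgW s (hZW s (hSΩ hs) hs0.symm), mul_zero, add_zero]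
  · rw [htilt, hgU p (mem_sup_right (mem_span_singleton_self p)), mul_zero, add_zero]
    exact hh.2
  · rw [htilt, hω.2, hgW ω (subset_span hω), mul_zero, add_zero]
  · intro hWeq
    exact hxg (hgW x (hWeq ▸ subset_span ⟨hxΩ, (htilt x).trans hxt⟩))

theorem Separates.exists_subset_span_sup {h₀ : ι → 𝕜} (h₀S : Separates S p h₀) (hS : S.Finite)
    (hSΩ : S ⊆ Ω) :
    ∃ h, Separates S p h ∧ Ω ⊆ (span 𝕜 {ω ∈ Ω | ω ⬝ᵥ h = 0} ⊔ 𝕜 ∙ p : Submodule 𝕜 (ι → 𝕜)) := by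
  obtain ⟨_, ⟨h, hh, rfl⟩, hmax⟩ := set_has_maximal_iff_noetherian.2 inferInstance
    ((fun h => span 𝕜 {ω ∈ Ω | ω ⬝ᵥ h = 0}) '' {h | Separates S p h}) ⟨_, mem_image_of_mem _ h₀S⟩
  refine ⟨h, hh, fun ω hω => by_contra fun hωW => ?_⟩
  obtain ⟨h', hh', hlt⟩ := hh.exists_span_lt hS hSΩ hω hωW
  exact hmax _ ⟨h', hh', rfl⟩ hlt

theorem Separates.exists_finrank_span_le {h₀ : ι → 𝕜} (h₀S : Separates S p h₀) (hS : S.Finite)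
    (hSΩ : S ⊆ Ω) : ∃ h, Separates S p h ∧
      finrank 𝕜 (span 𝕜 Ω) ≤ finrank 𝕜 (span 𝕜 {ω ∈ Ω | ω ⬝ᵥ h = 0}) + 1 := by
  obtain ⟨h, hh, hΩW⟩ := h₀S.exists_subset_span_sup hS hSΩ
  refine ⟨h, hh, ?_⟩
  calc finrank 𝕜 (span 𝕜 Ω) ≤ finrank 𝕜 ↥(span 𝕜 {ω ∈ Ω | ω ⬝ᵥ h = 0} ⊔ 𝕜 ∙ p) :=
        Submodule.finrank_mono (span_le.2 hΩW)
    _ ≤ finrank 𝕜 (span 𝕜 {ω ∈ Ω | ω ⬝ᵥ h = 0}) + finrank 𝕜 (𝕜 ∙ p) :=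
        Submodule.finrank_add_le_finrank_add_finrank _ _
    _ ≤ _ := by
        gcongr
        simpa using finrank_span_le_card (R := 𝕜) ({p} : Set (ι → 𝕜))

def IsDefiningNormal (S Ω : Set (ι → 𝕜)) (d : ℕ) (h : ι → 𝕜) : Prop :=
  (∀ s ∈ S, 0 ≤ s ⬝ᵥ h) ∧
    ∃ ω : Fin d → ι → 𝕜, (∀ i, ω i ∈ Ω) ∧ AffineIndependent 𝕜 ω ∧ ∀ i, ω i ⬝ᵥ h = 0

theorem Separates.of_eq_pos_mul {V : Submodule 𝕜 (ι → 𝕜)} {h g : ι → 𝕜} (hh : Separates S p h)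
    (hSV : S ⊆ V) (hpV : p ∈ V) {c : 𝕜} (hc : 0 < c) (hhg : ∀ x ∈ V, x ⬝ᵥ h = c * (x ⬝ᵥ g)) :
    Separates S p g :=
  ⟨fun s hs => (mul_nonneg_iff_of_pos_left hc).1 (hhg s (hSV hs) ▸ hh.1 s hs),
    neg_of_mul_neg_right (hhg p hpV ▸ hh.2) hc.le⟩

theorem Separates.exists_isDefiningNormal {h₀ : ι → 𝕜} (h₀S : Separates S p h₀) (hS : S.Finite)
    (hΩ : Ω.Finite) (hSΩ : S ⊆ Ω) {d : ℕ} (hd : finrank 𝕜 (span 𝕜 Ω) = d + 1)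
    (hp : p ∈ span 𝕜 Ω) : ∃ h ∈ {h ∈ normals Ω | IsDefiningNormal S Ω d h}, p ⬝ᵥ h < 0 := by
  obtain ⟨h, hh, hrank⟩ := h₀S.exists_finrank_span_le hS hSΩ
  obtain ⟨ω, hωZ, hω⟩ := exists_linearIndependent_fin_of_le_finrank_span
    (K := 𝕜) (d := d) (hΩ.subset (sep_subset Ω fun ω => ω ⬝ᵥ h = 0)) (by omega)
  have hTΩ : range ω ⊆ Ω := range_subset_iff.2 fun i => (hωZ i).1
  have hTh : ∀ x ∈ range ω, x ⬝ᵥ h = 0 := forall_mem_range.2 fun i => (hωZ i).2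
  have hΩh : ∃ v ∈ Ω, v ⬝ᵥ h ≠ 0 := by
    by_contra! hΩh
    exact hh.2.ne (dotProduct_eq_zero_of_mem_span hΩh hp)
  obtain ⟨hTn, v, hvΩ, hvn⟩ := normalOf_spec hTh hΩh
  obtain ⟨μ, hμ⟩ := exists_dotProduct_eq_mul_of_finrank_eq_succ
    (span_le.2 (hTΩ.trans subset_span)) (by rw [finrank_span_eq_card hω, Fintype.card_fin, hd])
    (fun _ => dotProduct_eq_zero_of_mem_span hTh) (fun _ => dotProduct_eq_zero_of_mem_span hTn)
    (subset_span hvΩ) hvn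
  obtain ⟨g, hg, c, hc, hcg⟩ : ∃ g ∈ ({normalOf Ω (range ω), -normalOf Ω (range ω)} : Set _),
      ∃ c > 0, ∀ x ∈ span 𝕜 Ω, x ⬝ᵥ h = c * (x ⬝ᵥ g) := by
    rcases lt_trichotomy μ 0 with hμ0 | rfl | hμ0
    · exact ⟨_, Or.inr rfl, -μ, neg_pos.2 hμ0, fun x hx => by rw [hμ x hx, dotProduct_neg]; ring⟩
    · exact absurd (hμ p hp) (by rw [zero_mul]; exact hh.2.ne)
    · exact ⟨_, Or.inl rfl, μ, hμ0, hμ⟩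
  have hgS := hh.of_eq_pos_mul (hSΩ.trans subset_span) hp hc hcg
  have hTg : ∀ i, ω i ⬝ᵥ g = 0 := fun i => by
    rcases hg with rfl | rfl
    · exact hTn _ (mem_range_self i)
    · rw [dotProduct_neg, hTn _ (mem_range_self i), neg_zero]
  exact ⟨g, ⟨mem_iUnion₂.2 ⟨_, hTΩ, hg⟩, hgS.1, ω, fun i => (hωZ i).1, hω.affineIndependent, hTg⟩,
    hgS.2⟩

theorem convexHull_eq_biInter_of_separates {S A H : Set (ι → 𝕜)} (hA : Convex 𝕜 A) (hSA : S ⊆ A)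
    (hH : H.Nonempty) (hHS : ∀ h ∈ H, ∀ s ∈ S, 0 ≤ s ⬝ᵥ h)
    (hsep : ∀ p ∈ A, p ∉ convexHull 𝕜 S → ∃ h ∈ H, p ⬝ᵥ h < 0) :
    convexHull 𝕜 S = ⋂ h ∈ H, {p | p ∈ A ∧ 0 ≤ p ⬝ᵥ h} := by
  refine (convexHull_min (fun s hs => mem_iInter₂.2 fun h hh => ?_)
    (convex_iInter₂ fun h _ => hA.inter (convex_halfSpace_ge (f := (· ⬝ᵥ h)) ?_ 0))).antisymm
    fun p hp => by_contra fun hpS => ?_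
  · exact ⟨hSA hs, hHS h hh s hs⟩
  · exact ⟨fun x y => add_dotProduct x y h, fun c x => smul_dotProduct c x h⟩
  obtain ⟨h₀, hh₀⟩ := hH
  obtain ⟨h, hh, hph⟩ := hsep p (mem_iInter₂.1 hp h₀ hh₀).1 hpS
  exact (mem_iInter₂.1 hp h hh).2.not_gt hph

end Separation

theorem exists_separates_of_notMem_convexHull {ι : Type*} [Fintype ι] {S : Set (ι → ℝ)}
    (hS : S.Finite) {u p : ι → ℝ} (hSu : ∀ s ∈ S, s ⬝ᵥ u = 1) (hpu : p ⬝ᵥ u = 1)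
    (hp : p ∉ convexHull ℝ S) : ∃ h, Separates S p h := by
  classical
  obtain ⟨f, c, hpc, hcS⟩ := geometric_hahn_banach_point_closed (convex_convexHull ℝ S)
    (hS.isClosed_convexHull ℝ) hp
  -- on the hyperplane `x ⬝ᵥ u = 1` the affine separator `f - c` is the linear map `f - c u`
  refine ⟨(dotProductEquiv ℝ ι).symm f.toLinearMap - c • u, fun s hs => ?_, ?_⟩
  · rw [dotProduct_sub, dotProduct_smul, dotProduct_dotProductEquiv_symm, hSu s hs, smul_eq_mul,
      mul_one, sub_nonneg]
    exact (hcS s (subset_convexHull ℝ S hs)).le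
  · rw [dotProduct_sub, dotProduct_smul, dotProduct_dotProductEquiv_symm, hpu, smul_eq_mul,
      mul_one, sub_neg]
    exact hpc

/-- Defining inequalities: for finite `S ⊆ Ω ⊆ ℝⁿ` with `0 ∉ aff(Ω)` and
`d = dim aff(Ω)`, the convex hull of `S` is a finite intersection of half-spaces
in `aff(Ω)`, each of whose boundary hyperplane passes through `d` affinely
independent points of `Ω`. -/
theorem defining_inequalities
    (n : ℕ) (S Ω : Set (Fin n → ℝ)) (hS : S.Finite) (hΩ : Ω.Finite) (hSΩ : S ⊆ Ω)
    (h0 : (0 : Fin n → ℝ) ∉ affineSpan ℝ Ω)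
    (d : ℕ) (hd : d = Module.finrank ℝ (affineSpan ℝ Ω).direction) :
    ∃ H : Finset (Fin n → ℝ),
      (convexHull ℝ S = ⋂ h ∈ H, {p : Fin n → ℝ | p ∈ affineSpan ℝ Ω ∧ 0 ≤ p ⬝ᵥ h}) ∧
      ∀ h ∈ H, ∃ ω : Fin d → (Fin n → ℝ),
        (∀ i, ω i ∈ Ω) ∧ AffineIndependent ℝ ω ∧ ∀ i, ω i ⬝ᵥ h = 0 := by
  obtain rfl | ⟨q, hq⟩ := Ω.eq_empty_or_nonempty
  · obtain rfl : d = 0 := by simp [hd]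
    refine ⟨{0}, by simp [subset_empty_iff.1 hSΩ], fun _ _ => ⟨Fin.elim0, fun i => i.elim0,
      affineIndependent_of_subsingleton ℝ _, fun i => i.elim0⟩⟩
  have hV : finrank ℝ (span ℝ Ω) = d + 1 :=
    hd ▸ finrank_span_eq_finrank_direction_add_one ⟨q, hq⟩ h0
  obtain ⟨u, hu⟩ := AffineSubspace.exists_dotProduct_eq_one h0
  have hSu : ∀ s ∈ S, s ⬝ᵥ u = 1 := fun s hs => hu s (subset_affineSpan ℝ Ω (hSΩ hs))
  have hN : {h ∈ normals Ω | IsDefiningNormal S Ω d h}.Finite := hΩ.normals.subset (sep_subset _ _)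
  refine ⟨hN.toFinset, ?_, fun h hh => (hN.mem_toFinset.1 hh).2.2⟩
  simp only [Set.Finite.mem_toFinset]
  refine convexHull_eq_biInter_of_separates (affineSpan ℝ Ω).convex
    (hSΩ.trans (subset_affineSpan ℝ Ω)) ?_ (fun h hh => hh.2.1) fun p hpA hp => ?_
  · have hu_sep : Separates S (-q) u := ⟨fun s hs => (hSu s hs).symm ▸ zero_le_one,
      by rw [neg_dotProduct, hu q (subset_affineSpan ℝ Ω hq)]; norm_num⟩
    obtain ⟨h, hh, -⟩ := hu_sep.exists_isDefiningNormal hS hΩ hSΩ hV (neg_mem (subset_span hq))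
    exact ⟨h, hh⟩
  · obtain ⟨h₀, hh₀⟩ := exists_separates_of_notMem_convexHull hS hSu (hu p hpA) hp
    exact hh₀.exists_isDefiningNormal hS hΩ hSΩ hV (affineSpan_subset_span hpA)
end

section
/- Let T = e₁ ⊗ I₃ + e₂ ⊗ M ∈ ℂ² ⊗ ℂ³ ⊗ ℂ³, where M = diag(1, ζ, ζ²) with ζ a primitive cube root of unity. The Lie-algebra stabilizer of T, i.e. the space of triples (A₁, A₂, A₃) of matrices of sizes 2×2, 3×3, 3×3 with (A₁ ⊗ I₃ ⊗ I₃ + I₂ ⊗ A₂ ⊗ I₃ + I₂ ⊗ I₃ ⊗ A₃) T = 0, has dimension 4. -/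
noncomputable def stabMap : (Fin 4 → ℂ) →ₗ[ℂ]
    (Matrix (Fin 2) (Fin 2) ℂ × Matrix (Fin 3) (Fin 3) ℂ × Matrix (Fin 3) (Fin 3) ℂ) where
  toFun v := (Matrix.of fun i i' => if i = i' then v 0 else 0,
              Matrix.of fun j k => if j = k then ![v 1, v 2, v 3] j else 0,
              Matrix.of fun j k => if j = k then -v 0 - ![v 1, v 2, v 3] j else 0)
  map_add' u v := by
    refine Prod.ext ?_ (Prod.ext ?_ ?_) <;> ext i j <;>
      fin_cases i <;> fin_cases j <;> simp [Matrix.of_apply] <;> ring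
  map_smul' r v := by
    refine Prod.ext ?_ (Prod.ext ?_ ?_) <;> ext i j <;>
      fin_cases i <;> fin_cases j <;> simp [Matrix.of_apply] <;> ring

/-- Let `ζ` be a primitive cube root of unity and
`T = e₁ ⊗ I₃ + e₂ ⊗ diag(1, ζ, ζ²) ∈ ℂ² ⊗ ℂ³ ⊗ ℂ³`.
The Lie-algebra stabilizer of `T`, i.e. the subspace of triples `(A₁, A₂, A₃)` with
`(A₁ ⊗ I₃ ⊗ I₃ + I₂ ⊗ A₂ ⊗ I₃ + I₂ ⊗ I₃ ⊗ A₃) T = 0`, has dimension `4`. -/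
theorem lie_stabilizer_dim_four (ζ : ℂ) (hζ : IsPrimitiveRoot ζ 3)
    (T : Fin 2 → Fin 3 → Fin 3 → ℂ)
    (hT : T = fun (i : Fin 2) (j k : Fin 3) =>
      if i = 0 then (if j = k then 1 else 0) else (if j = k then ζ ^ (j : ℕ) else 0))
    (W : Submodule ℂ
      (Matrix (Fin 2) (Fin 2) ℂ × Matrix (Fin 3) (Fin 3) ℂ × Matrix (Fin 3) (Fin 3) ℂ))
    (hW : (W : Set (Matrix (Fin 2) (Fin 2) ℂ × Matrix (Fin 3) (Fin 3) ℂ ×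
        Matrix (Fin 3) (Fin 3) ℂ)) =
      {x | ∀ (i : Fin 2) (j k : Fin 3),
        (∑ i', x.1 i i' * T i' j k) + (∑ j', x.2.1 j j' * T i j' k) +
          (∑ k', x.2.2 k k' * T i j k') = 0}) :
    Module.finrank ℂ W = 4 := by
  subst hT
  have hc3 : ζ ^ 3 = 1 := hζ.pow_eq_one
  have hne1 : ζ ≠ 1 := hζ.ne_one (by norm_num)
  have hz0 : ζ ≠ 0 := by
    intro h; rw [h] at hc3; norm_num at hc3
  have hs : ζ ^ 2 + ζ + 1 = 0 := by
    have hmul : (ζ - 1) * (ζ ^ 2 + ζ + 1) = 0 := by linear_combination hc3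
    rcases mul_eq_zero.mp hmul with h | h
    · exact absurd (sub_eq_zero.mp h) hne1
    · exact h
  have hd1 : ζ - 1 ≠ 0 := sub_ne_zero.mpr hne1
  have hd2 : ζ ^ 2 - 1 ≠ 0 := by
    intro h
    have h2 : ζ ^ 2 = 1 := by linear_combination h
    have h3 : ζ ^ 3 = ζ := by rw [pow_succ, h2, one_mul]
    rw [h3] at hc3; exact hne1 hc3
  have hd3 : ζ ^ 2 - ζ ≠ 0 := by
    have : ζ ^ 2 - ζ = ζ * (ζ - 1) := by ring
    rw [this]; exact mul_ne_zero hz0 hd1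
  have hinj : Function.Injective stabMap := by
    intro u w h
    rw [Prod.ext_iff, Prod.ext_iff] at h
    obtain ⟨h1, h2, h3⟩ := h
    funext i
    fin_cases i
    · simpa [stabMap] using congrFun (congrFun h1 0) 0
    · simpa [stabMap] using congrFun (congrFun h2 0) 0
    · simpa [stabMap] using congrFun (congrFun h2 1) 1
    · simpa [stabMap] using congrFun (congrFun h2 2) 2
  have hWeq : W = LinearMap.range stabMap := by
    apply le_antisymm
    · intro x hx
      have hx' : x ∈ (W : Set _) := hx
      rw [hW] at hx'
      simp only [Set.mem_setOf_eq] at hx'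
      have E000 := hx' 0 0 0
      have E001 := hx' 0 0 1
      have E002 := hx' 0 0 2
      have E010 := hx' 0 1 0
      have E011 := hx' 0 1 1
      have E012 := hx' 0 1 2
      have E020 := hx' 0 2 0
      have E021 := hx' 0 2 1
      have E022 := hx' 0 2 2
      have F000 := hx' 1 0 0
      have F001 := hx' 1 0 1
      have F002 := hx' 1 0 2
      have F010 := hx' 1 1 0
      have F011 := hx' 1 1 1
      have F012 := hx' 1 1 2
      have F020 := hx' 1 2 0
      have F021 := hx' 1 2 1
      have F022 := hx' 1 2 2
      simp [Fin.sum_univ_succ] at E000 E001 E002 E010 E011 E012 E020 E021 E022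
      simp [Fin.sum_univ_succ] at F000 F001 F002 F010 F011 F012 F020 F021 F022
      -- off diagonal of B and C vanish
      have hb01 : x.2.1 0 1 = 0 := by
        have hm : (ζ - 1) * x.2.1 0 1 = 0 := by linear_combination F001 - E001
        exact (mul_eq_zero.mp hm).resolve_left hd1
      have hb02 : x.2.1 0 2 = 0 := by
        have hm : (ζ ^ 2 - 1) * x.2.1 0 2 = 0 := by linear_combination F002 - E002
        exact (mul_eq_zero.mp hm).resolve_left hd2
      have hc01 : x.2.2 0 1 = 0 := by
        have hm : (ζ - 1) * x.2.2 0 1 = 0 := by linear_combination F010 - E010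
        exact (mul_eq_zero.mp hm).resolve_left hd1
      have hc02 : x.2.2 0 2 = 0 := by
        have hm : (ζ ^ 2 - 1) * x.2.2 0 2 = 0 := by linear_combination F020 - E020
        exact (mul_eq_zero.mp hm).resolve_left hd2
      have hb12 : x.2.1 1 2 = 0 := by
        have hm : (ζ ^ 2 - ζ) * x.2.1 1 2 = 0 := by linear_combination F012 - ζ * E012
        exact (mul_eq_zero.mp hm).resolve_left hd3
      have hc12 : x.2.2 1 2 = 0 := by
        have hm : (ζ ^ 2 - ζ) * x.2.2 1 2 = 0 := by linear_combination F021 - ζ * E021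
        exact (mul_eq_zero.mp hm).resolve_left hd3
      have hb10 : x.2.1 1 0 = 0 := by linear_combination E010 - hc01
      have hc10 : x.2.2 1 0 = 0 := by linear_combination E001 - hb01
      have hb20 : x.2.1 2 0 = 0 := by linear_combination E020 - hc02
      have hc20 : x.2.2 2 0 = 0 := by linear_combination E002 - hb02
      have hb21 : x.2.1 2 1 = 0 := by linear_combination E021 - hc12
      have hc21 : x.2.2 2 1 = 0 := by linear_combination E012 - hb12
      -- structure of A
      have ha10 : x.1 1 0 = 0 := by
        linear_combination (F000 - E000 + F011 - ζ * E011 + F022 - ζ ^ 2 * E022) / 3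
          + ((x.1 0 1 - x.1 1 1 + x.1 0 0) / 3) * hs + (x.1 0 1 * ζ / 3) * hc3
      have ha01 : x.1 0 1 = 0 := by
        have hm : (ζ * (ζ - 1)) * x.1 0 1 = 0 := by
          linear_combination ζ * (F000 - E000) - (F011 - ζ * E011) - (ζ - 1) * ha10
        exact (mul_eq_zero.mp hm).resolve_left (mul_ne_zero hz0 hd1)
      have ha11 : x.1 1 1 = x.1 0 0 := by
        linear_combination (F000 - E000) - ha10 + ha01
      have hcd0 : x.2.2 0 0 = -(x.1 0 0) - x.2.1 0 0 := by
        linear_combination E000 - ha01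
      have hcd1 : x.2.2 1 1 = -(x.1 0 0) - x.2.1 1 1 := by
        linear_combination E011 - ζ * ha01
      have hcd2 : x.2.2 2 2 = -(x.1 0 0) - x.2.1 2 2 := by
        linear_combination E022 - ζ ^ 2 * ha01
      refine ⟨![x.1 0 0, x.2.1 0 0, x.2.1 1 1, x.2.1 2 2], ?_⟩
      refine Prod.ext ?_ (Prod.ext ?_ ?_)
      · ext i j
        fin_cases i <;> fin_cases j <;> simp [stabMap] <;>
          first
            | linear_combination -ha01
            | linear_combination -ha10
            | linear_combination -ha11
      · ext i j
        fin_cases i <;> fin_cases j <;> simp [stabMap] <;>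
          first
            | linear_combination -hb01
            | linear_combination -hb02
            | linear_combination -hb10
            | linear_combination -hb12
            | linear_combination -hb20
            | linear_combination -hb21
      · ext i j
        fin_cases i <;> fin_cases j <;> simp [stabMap] <;>
          first
            | linear_combination -hc01
            | linear_combination -hc02
            | linear_combination -hc10
            | linear_combination -hc12
            | linear_combination -hc20
            | linear_combination -hc21
            | linear_combination -hcd0
            | linear_combination -hcd1
            | linear_combination -hcd2
    · rintro x ⟨v, rfl⟩
      rw [← SetLike.mem_coe, hW]
      simp only [Set.mem_setOf_eq]
      intro i j k
      fin_cases i <;> fin_cases j <;> fin_cases k <;>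
        simp [stabMap, Fin.sum_univ_succ] <;> ring
  rw [hWeq, LinearMap.finrank_range_of_inj hinj]
  simp
end

section
/- Let T ∈ ℂᵃ ⊗ ℂᵇ ⊗ ℂᶜ, let Ω = {(e_i, e_j, e_k)} be the set of weights and identify them as vectors in ℝ^{a+b+c}. Suppose H is a finite set of vectors in ℝ^{a+b+c} such that for every subset S ⊆ Ω some subset of H defines conv(S) within the ambient space, in the sense that conv(S) = ⋂_{h ∈ H_S} {p : ⟨p,h⟩ ≥ 0} ∩ aff(Ω). Call h ∈ H attainable for T if there exist invertible lower triangular matrices A, B, C with supp((A ⊗ B ⊗ C)T) ⊆ Ω_h := {ω ∈ Ω : ⟨ω,h⟩ ≥ 0}. Then ⋂_{(A,B,C) lower triangular invertible} conv(supp((A⊗B⊗C)T)) = ⋂_{h ∈ H, h attainable for T} {p ∈ aff(Ω) : ⟨p,h⟩ ≥ 0}. -/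
variable {a b c : ℕ}

/-- The weight `(e_i, e_j, e_k) ∈ ℝᵃ × ℝᵇ × ℝᶜ` associated to an index triple. -/
def wt (x : Fin a × Fin b × Fin c) : (Fin a → ℝ) × (Fin b → ℝ) × (Fin c → ℝ) :=
  (Pi.single x.1 1, Pi.single x.2.1 1, Pi.single x.2.2 1)

/-- The standard inner product on `ℝᵃ × ℝᵇ × ℝᶜ ≅ ℝ^{a+b+c}`. -/
def dotw (p h : (Fin a → ℝ) × (Fin b → ℝ) × (Fin c → ℝ)) : ℝ :=
  (∑ i, p.1 i * h.1 i) + (∑ j, p.2.1 j * h.2.1 j) + (∑ k, p.2.2 k * h.2.2 k)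

/-- The set `Ω` of all weights. -/
def OmegaSet (a b c : ℕ) : Set ((Fin a → ℝ) × (Fin b → ℝ) × (Fin c → ℝ)) :=
  Set.range (wt (a := a) (b := b) (c := c))

/-- An invertible lower triangular matrix. -/
def IsLowerTriInv {n : ℕ} (A : Matrix (Fin n) (Fin n) ℂ) : Prop :=
  IsUnit A.det ∧ ∀ i j : Fin n, i < j → A i j = 0

/-- The action `(A ⊗ B ⊗ C) T` on 3-tensors. -/
noncomputable def actM (A : Matrix (Fin a) (Fin a) ℂ) (B : Matrix (Fin b) (Fin b) ℂ)
    (C : Matrix (Fin c) (Fin c) ℂ) (T : Fin a → Fin b → Fin c → ℂ) :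
    Fin a → Fin b → Fin c → ℂ :=
  fun i j k => ∑ i', ∑ j', ∑ k', A i i' * B j j' * C k k' * T i' j' k'

/-- The support of a tensor, as a set of weights. -/
def suppw (T : Fin a → Fin b → Fin c → ℂ) :
    Set ((Fin a → ℝ) × (Fin b → ℝ) × (Fin c → ℝ)) :=
  {v | ∃ x : Fin a × Fin b × Fin c, T x.1 x.2.1 x.2.2 ≠ 0 ∧ v = wt x}

lemma suppw_subset_Omega (T : Fin a → Fin b → Fin c → ℂ) :
    suppw T ⊆ OmegaSet a b c := by
  rintro v ⟨x, -, rfl⟩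
  exact ⟨x, rfl⟩

lemma dotw_linear (h : (Fin a → ℝ) × (Fin b → ℝ) × (Fin c → ℝ)) :
    IsLinearMap ℝ (fun p => dotw p h) := by
  constructor
  · intro p q
    simp [dotw, add_mul, Finset.sum_add_distrib]
    ring
  · intro r p
    simp only [dotw, Prod.smul_fst, Prod.smul_snd, Pi.smul_apply, smul_eq_mul,
      Finset.mul_sum, mul_assoc]
    rw [mul_add, mul_add, Finset.mul_sum, Finset.mul_sum, Finset.mul_sum]

lemma convex_half (h : (Fin a → ℝ) × (Fin b → ℝ) × (Fin c → ℝ)) :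
    Convex ℝ {p | p ∈ affineSpan ℝ (OmegaSet a b c) ∧ 0 ≤ dotw p h} := by
  have he : {p | p ∈ affineSpan ℝ (OmegaSet a b c) ∧ 0 ≤ dotw p h}
      = (affineSpan ℝ (OmegaSet a b c) : Set _) ∩ {p | 0 ≤ dotw p h} := rfl
  rw [he]
  exact (affineSpan ℝ (OmegaSet a b c)).convex.inter
    (convex_halfSpace_ge (dotw_linear h) 0)

/-- Lemma 3.2 (without the dominant cone): if `H` is a finite set of inequalities
such that the convex hull of every subset `S ⊆ Ω` is cut out within `aff Ω` by a
subset of `H`, then the intersection of the convex hulls of the supports of all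
lower-triangular transforms of `T` equals the intersection of the half-spaces
(in `aff Ω`) of the inequalities in `H` that are attainable for `T`. -/
theorem borel_polytope_via_attainable_inequalities
    (T : Fin a → Fin b → Fin c → ℂ)
    (H : Finset ((Fin a → ℝ) × (Fin b → ℝ) × (Fin c → ℝ)))
    (hH : ∀ S : Set ((Fin a → ℝ) × (Fin b → ℝ) × (Fin c → ℝ)), S ⊆ OmegaSet a b c →
      ∃ HS : Finset ((Fin a → ℝ) × (Fin b → ℝ) × (Fin c → ℝ)), HS ⊆ H ∧
        convexHull ℝ S =
          ⋂ h ∈ HS, {p | p ∈ affineSpan ℝ (OmegaSet a b c) ∧ 0 ≤ dotw p h}) :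
    (⋂ (A : Matrix (Fin a) (Fin a) ℂ) (_ : IsLowerTriInv A)
        (B : Matrix (Fin b) (Fin b) ℂ) (_ : IsLowerTriInv B)
        (C : Matrix (Fin c) (Fin c) ℂ) (_ : IsLowerTriInv C),
        convexHull ℝ (suppw (actM A B C T)))
      = ⋂ h ∈ H, ⋂ (_ : ∃ (A : Matrix (Fin a) (Fin a) ℂ) (B : Matrix (Fin b) (Fin b) ℂ)
            (C : Matrix (Fin c) (Fin c) ℂ), IsLowerTriInv A ∧ IsLowerTriInv B ∧
            IsLowerTriInv C ∧
            suppw (actM A B C T) ⊆ {ω ∈ OmegaSet a b c | 0 ≤ dotw ω h}),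
          {p | p ∈ affineSpan ℝ (OmegaSet a b c) ∧ 0 ≤ dotw p h} := by
  ext p
  simp only [Set.mem_iInter, Set.mem_setOf_eq]
  constructor
  · rintro hp h hhH ⟨A, B, C, hA, hB, hC, hsub⟩
    have hp' := hp A hA B hB C hC
    refine convexHull_min ?_ (convex_half h) hp'
    intro v hv
    obtain ⟨hvΩ, hv0⟩ := hsub hv
    exact ⟨subset_affineSpan ℝ _ hvΩ, hv0⟩
  · intro hp A hA B hB C hC
    obtain ⟨HS, hHS, hconv⟩ := hH (suppw (actM A B C T)) (suppw_subset_Omega _)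
    rw [hconv]
    simp only [Set.mem_iInter, Set.mem_setOf_eq]
    intro h hh
    have hsupp : suppw (actM A B C T) ⊆ {ω ∈ OmegaSet a b c | 0 ≤ dotw ω h} := by
      intro v hv
      have hmem : v ∈ convexHull ℝ (suppw (actM A B C T)) :=
        subset_convexHull ℝ _ hv
      rw [hconv] at hmem
      simp only [Set.mem_iInter, Set.mem_setOf_eq] at hmem
      exact ⟨suppw_subset_Omega _ hv, (hmem h hh).2⟩
    exact hp h (hHS hh) ⟨A, B, C, hA, hB, hC, hsupp⟩
end

section
/- Let M be a matrix with entries in {−1, 0, 1}, having n columns and rank n−1. Then there is a nonzero integer vector h ∈ ℤⁿ with M h = 0 and ‖h‖_∞ ≤ n^{n−1}. -/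
/-!
Choose `n - 1` rows of `M` that span its row space over `ℚ`. Every row of `M` is a rational
combination of them, so an integer vector killing these rows is killed by `M`. Siegel's lemma,
applied to `n - 1` equations in `n` unknowns with coefficients bounded by `1`, provides such a
nonzero vector with `‖h‖_∞ ≤ (n · 1) ^ ((n - 1) / (n - (n - 1))) = n ^ (n - 1)`.
-/

open Matrix Submodule

theorem Matrix.exists_submatrix_rowSpan_eq {K m n : Type*} [Field K] [Finite m] [Fintype n]
    (A : Matrix m n K) {r : ℕ} (hr : A.rank = r) :
    ∃ g : Fin r → m, span K (Set.range (A.submatrix g id).row) = span K (Set.range A.row) := by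
  obtain ⟨κ, a, -, hspan, hli⟩ := exists_linearIndependent' K A.row
  have : Fintype κ := @Fintype.ofFinite κ hli.finite
  have hcard : Fintype.card κ = r := by
    rw [← finrank_span_eq_card hli, hspan, ← rank_eq_finrank_span_row, hr]
  refine ⟨a ∘ (Fintype.equivFinOfCardEq hcard).symm, ?_⟩
  rw [← hspan]
  exact congrArg (span K) (EquivLike.range_comp (A.row ∘ a) _)

theorem Matrix.mulVec_eq_zero_of_row_mem_span {R m n p : Type*} [CommSemiring R] [Fintype n]
    {A : Matrix m n R} {B : Matrix p n R} (hAB : ∀ i, A.row i ∈ span R (Set.range B.row))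
    {v : n → R} (hv : B *ᵥ v = 0) : A *ᵥ v = 0 := by
  have hspan : span R (Set.range B.row) ≤ LinearMap.ker (dotProductBilin R R v) := by
    rw [span_le]
    rintro _ ⟨j, rfl⟩
    exact (dotProduct_comm _ _).trans (congrFun hv j)
  ext i
  exact (dotProduct_comm _ _).trans (hspan (hAB i))

theorem Matrix.map_mulVec_eq_zero_iff {R S m n : Type*} [CommSemiring R] [CommSemiring S]
    [Fintype n] {f : R →+* S} (hf : Function.Injective f) {A : Matrix m n R} {v : n → R} :
    A.map f *ᵥ (f ∘ v) = 0 ↔ A *ᵥ v = 0 := by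
  simp only [funext_iff, ← RingHom.map_mulVec, Pi.zero_apply, map_eq_zero_iff f hf]

section

attribute [local instance] Matrix.seminormedAddCommGroup

theorem Int.Matrix.exists_ne_zero_mulVec_eq_zero_abs_le {α β : Type*} [Fintype α] [Fintype β]
    (A : Matrix α β ℤ) (hcard : Fintype.card β = Fintype.card α + 1) {C : ℤ} (hC : 1 ≤ C)
    (hA : ∀ i j, |A i j| ≤ C) :
    ∃ t : β → ℤ, t ≠ 0 ∧ A *ᵥ t = 0 ∧ ∀ j, |t j| ≤ (Fintype.card β * C) ^ Fintype.card α := by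
  rcases (Fintype.card α).eq_zero_or_pos with hα | hα
  · have : IsEmpty α := Fintype.card_eq_zero_iff.mp hα
    have : Nonempty β := Fintype.card_pos_iff.mp (by omega)
    refine ⟨fun _ => 1, Function.ne_iff.mpr ⟨Classical.arbitrary β, one_ne_zero⟩,
      Subsingleton.elim _ _, fun j => by simp⟩
  obtain ⟨t, ht0, hAt, hnorm⟩ := exists_ne_zero_int_vec_norm_le A (by omega) hα
  have hAC : max 1 ‖A‖ ≤ C := max_le (mod_cast hC) <|
    (norm_le_iff (by positivity)).mpr fun i j => by
      rw [Int.norm_eq_abs, ← Int.cast_abs]; exact_mod_cast hA i j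
  have hexp : (Fintype.card α : ℝ) / (Fintype.card β - Fintype.card α) = Fintype.card α := by
    rw [hcard, Nat.cast_succ, add_sub_cancel_left, div_one]
  rw [hexp, Real.rpow_natCast] at hnorm
  refine ⟨t, ht0, hAt, fun j => ?_⟩
  have : (|t j| : ℝ) ≤ (Fintype.card β * C) ^ Fintype.card α :=
    calc (|t j| : ℝ) = ‖t j‖ := (Int.norm_eq_abs _).symm
      _ ≤ ‖t‖ := norm_le_pi_norm t j
      _ ≤ (Fintype.card β * max 1 ‖A‖) ^ Fintype.card α := hnorm
      _ ≤ (Fintype.card β * C) ^ Fintype.card α := by gcongr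
  exact_mod_cast this

end

/-- Siegel-type bound: a matrix with entries in `{-1, 0, 1}`, `n` columns and
rank `n - 1` has a nonzero integer kernel vector `h` with `‖h‖_∞ ≤ n^(n-1)`. -/
theorem siegel_kernel_bound (m n : ℕ) (hn : 0 < n) (M : Matrix (Fin m) (Fin n) ℤ)
    (hentries : ∀ i j, |M i j| ≤ 1)
    (hrank : (M.map (Int.cast : ℤ → ℚ)).rank = n - 1) :
    ∃ h : Fin n → ℤ, h ≠ 0 ∧ M.mulVec h = 0 ∧ ∀ i, |h i| ≤ (n : ℤ) ^ (n - 1) := by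
  obtain ⟨g, hg⟩ := (M.map (Int.cast : ℤ → ℚ)).exists_submatrix_rowSpan_eq hrank
  obtain ⟨t, ht0, hgt, ht⟩ := Int.Matrix.exists_ne_zero_mulVec_eq_zero_abs_le (M.submatrix g id)
    (by simp only [Fintype.card_fin]; omega) le_rfl fun i j => hentries (g i) j
  refine ⟨t, ht0, ?_, by simpa using ht⟩
  have hcast : Function.Injective (Int.castRingHom ℚ) := Int.cast_injective
  rw [← map_mulVec_eq_zero_iff hcast]
  exact mulVec_eq_zero_of_row_mem_span (fun i => hg.ge (subset_span ⟨i, rfl⟩))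
    ((map_mulVec_eq_zero_iff hcast).mpr hgt)
end

section
/- Let G = {g₁,…,g_t} be a finite set of nonzero polynomials in F[x₁,…,x_m] over a field F with a fixed monomial order, and suppose that for all i ≠ j the S-polynomial S(gᵢ, gⱼ) reduces to 0 modulo G. Then for every nonzero f in the ideal generated by G, some g ∈ G has leading term dividing the leading term of f (i.e., G is a Gröbner basis of ⟨G⟩). Conversely, if G is a Gröbner basis of ⟨G⟩ then all S-polynomials S(gᵢ, gⱼ) reduce to 0 modulo G. -/
/-!
Say that `f` is represented below a set `D` of monomials if `f = ∑ cᵢ xᵃⁱ gᵢ` with `gᵢ ∈ G` and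
every leading monomial `aᵢ + deg gᵢ` in `D`. A reduction of `f` to `0` is such a representation
below `deg f`; so if the S-polynomials reduce to `0`, each `S(gᵢ, gⱼ)` is represented strictly
below `lcm(deg gᵢ, deg gⱼ)`.

Given `f ∈ ⟨G⟩`, pick a representation below `{ν ≤ d}` with `d` minimal (monomial orders are
well-founded by Dickson's lemma). If `deg f < d`, the summands with leading monomial exactly `d`
cancel at the top, so they combine to a sum of monomial multiples of S-polynomials, each
represented below `{ν < d}`, contradicting minimality. Hence `d = deg f`, and the coefficient of
`x^(deg f)` in `f` comes from a summand `c xᵃ g` with `a + deg g = deg f`.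

Conversely, if `G` is a Gröbner basis, cancelling the leading term of `f ∈ ⟨G⟩` by a multiple of
some `g ∈ G` stays in `⟨G⟩` and lowers the leading monomial, so `f` reduces to `0`.
-/

/-- A monomial order on monomials in variables `σ`. -/
structure MonomialOrd (σ : Type) : Type where
  le : (σ →₀ ℕ) → (σ →₀ ℕ) → Prop
  le_refl : ∀ a, le a a
  le_trans : ∀ a b c, le a b → le b c → le a c
  le_antisymm : ∀ a b, le a b → le b a → a = b
  le_total : ∀ a b, le a b ∨ le b a
  add_right : ∀ a b r, le a b ↔ le (a + r) (b + r)
  le_add : ∀ a r, le a (a + r)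

/-- `μ` is the leading monomial of `f` with respect to the monomial order `ord`. -/
def IsLeadingMonomial {σ F : Type} [Field F] (ord : MonomialOrd σ)
    (f : MvPolynomial σ F) (μ : σ →₀ ℕ) : Prop :=
  μ ∈ f.support ∧ ∀ ν ∈ f.support, ord.le ν μ

/-- The leading term of `g` divides the leading term of `f`. -/
def LeadTermDvd {σ F : Type} [Field F] (ord : MonomialOrd σ)
    (g f : MvPolynomial σ F) : Prop :=
  ∃ μg μf, IsLeadingMonomial ord g μg ∧ IsLeadingMonomial ord f μf ∧ μg ≤ μf

/-- `s` is the S-polynomial of `f` and `g`: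
`S(f,g) = x^(γ-μf)/lc(f) · f − x^(γ-μg)/lc(g) · g` where `γ = μf ⊔ μg`. -/
def IsSPolynomial {σ F : Type} [Field F] (ord : MonomialOrd σ)
    (f g s : MvPolynomial σ F) : Prop :=
  ∃ (μf μg γ : σ →₀ ℕ), IsLeadingMonomial ord f μf ∧ IsLeadingMonomial ord g μg ∧
    (∀ i, γ i = max (μf i) (μg i)) ∧
    s = (MvPolynomial.coeff μf f)⁻¹ • (MvPolynomial.monomial (γ - μf) (1 : F) * f)
      - (MvPolynomial.coeff μg g)⁻¹ • (MvPolynomial.monomial (γ - μg) (1 : F) * g)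

/-- `f` reduces to `r` modulo `g` in one step: the leading term of `g` divides a
term of `f`, and `r = f − (that term / LT(g)) · g`. -/
def ReduceStep {σ F : Type} [Field F] (ord : MonomialOrd σ)
    (g f r : MvPolynomial σ F) : Prop :=
  ∃ μ ∈ f.support, ∃ μg, IsLeadingMonomial ord g μg ∧ μg ≤ μ ∧
    r = f - (MvPolynomial.coeff μ f / MvPolynomial.coeff μg g) •
        (MvPolynomial.monomial (μ - μg) (1 : F) * g)

/-- `f` reduces to `r` modulo `G`: a finite chain of one-step reductions by
elements of `G`. -/
def ReducesTo {σ F : Type} [Field F] (ord : MonomialOrd σ)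
    (G : Finset (MvPolynomial σ F)) (f r : MvPolynomial σ F) : Prop :=
  Relation.ReflTransGen (fun p q => ∃ g ∈ G, ReduceStep ord g p q) f r

namespace MonomialOrd

variable {σ : Type} (ord : MonomialOrd σ)

def Syn (_ : MonomialOrd σ) : Type := σ →₀ ℕ

noncomputable instance : AddCommMonoid ord.Syn := inferInstanceAs (AddCommMonoid (σ →₀ ℕ))

noncomputable instance : LinearOrder ord.Syn where
  le := ord.le
  le_refl := ord.le_refl
  le_trans := ord.le_trans
  le_antisymm := ord.le_antisymm
  le_total := ord.le_total
  toDecidableLE := Classical.decRel _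

instance : IsOrderedAddMonoid ord.Syn where
  add_le_add_left a b h c := (ord.add_right a b c).mp h

theorem le_of_le {a b : σ →₀ ℕ} (h : a ≤ b) : ord.le a b := by
  rw [← add_tsub_cancel_of_le h]
  exact ord.le_add a _

-- Dickson's lemma, via `Finsupp.wellQuasiOrderedLE`; it makes `ord.Syn` well-founded.
instance [Finite σ] : WellQuasiOrderedLE ord.Syn :=
  ⟨fun f => let ⟨i, j, hij, h⟩ := wellQuasiOrdered_le (α := σ →₀ ℕ) f
    ⟨i, j, hij, ord.le_of_le h⟩⟩

noncomputable def toMonomialOrder [Finite σ] : MonomialOrder σ where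
  syn := ord.Syn
  toSyn := AddEquiv.refl _
  toSyn_monotone _ _ := ord.le_of_le

end MonomialOrd

namespace MonomialOrder

open MvPolynomial Set

variable {σ : Type*} {m : MonomialOrder σ}

section CommSemiring

variable {R : Type*} [CommSemiring R]

theorem degree_monomial_mul [NoZeroDivisors R] {a : σ →₀ ℕ} {c : R} {g : MvPolynomial σ R}
    (hc : c ≠ 0) (hg : g ≠ 0) : m.degree (monomial a c * g) = a + m.degree g := by
  classical
  rw [m.degree_mul (by simpa using hc) hg, degree_monomial, if_neg hc]

theorem toSyn_le_of_mem_support_monomial_mul {a ν : σ →₀ ℕ} {c : R} {g : MvPolynomial σ R}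
    (hν : ν ∈ (monomial a c * g).support) : m.toSyn ν ≤ m.toSyn (a + m.degree g) := by
  refine (m.le_degree hν).trans (degree_mul_le.trans ?_)
  rw [map_add, map_add]
  exact add_le_add_left (degree_monomial_le c) _

theorem toSyn_degree_lt_of_mem_restrictSupport {p : MvPolynomial σ R} {d : m.syn}
    (hp : p ∈ restrictSupport R (m.toSyn ⁻¹' Iio d)) (hd : 0 < d) : m.toSyn (m.degree p) < d := by
  rcases eq_or_ne p 0 with rfl | hp0
  · simpa using hd
  · exact hp (m.degree_mem_support hp0)

variable (m) in
/-- For `D = Iic t`, the polynomials having a `t`-representation over `G` in the sense of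
Becker–Weispfenning. -/
noncomputable def boundedSpan (G : Set (MvPolynomial σ R)) (D : Set m.syn) :
    Submodule R (MvPolynomial σ R) :=
  Submodule.span R {p | ∃ g ∈ G, ∃ a, m.toSyn (a + m.degree g) ∈ D ∧ p = monomial a 1 * g}

variable {G : Set (MvPolynomial σ R)} {D D' : Set m.syn} {f : MvPolynomial σ R}

theorem monomial_mul_mem_boundedSpan {g : MvPolynomial σ R} (hg : g ∈ G) {a : σ →₀ ℕ}
    (ha : m.toSyn (a + m.degree g) ∈ D) (c : R) : monomial a c * g ∈ m.boundedSpan G D := by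
  have : monomial a c * g = c • (monomial a 1 * g) := by
    rw [← smul_mul_assoc, smul_monomial, smul_eq_mul, mul_one]
  rw [this]
  exact Submodule.smul_mem _ c (Submodule.subset_span ⟨g, hg, a, ha, rfl⟩)

theorem boundedSpan_mono (h : D ⊆ D') : m.boundedSpan G D ≤ m.boundedSpan G D' :=
  Submodule.span_mono fun _ ⟨g, hg, a, ha, hp⟩ => ⟨g, hg, a, h ha, hp⟩

theorem boundedSpan_union :
    m.boundedSpan G (D ∪ D') = m.boundedSpan G D ⊔ m.boundedSpan G D' := by
  rw [boundedSpan, boundedSpan, boundedSpan, ← Submodule.span_union]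
  congr 1
  ext p
  simp only [mem_union]
  constructor
  · rintro ⟨g, hg, a, ha | ha, rfl⟩
    exacts [.inl ⟨g, hg, a, ha, rfl⟩, .inr ⟨g, hg, a, ha, rfl⟩]
  · rintro (⟨g, hg, a, ha, rfl⟩ | ⟨g, hg, a, ha, rfl⟩)
    exacts [⟨g, hg, a, .inl ha, rfl⟩, ⟨g, hg, a, .inr ha, rfl⟩]

theorem boundedSpan_le_restrictSupport (hD : IsLowerSet D) :
    m.boundedSpan G D ≤ restrictSupport R (m.toSyn ⁻¹' D) := by
  refine Submodule.span_le.mpr ?_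
  rintro _ ⟨g, hg, a, ha, rfl⟩ ν hν
  exact hD (toSyn_le_of_mem_support_monomial_mul hν) ha

theorem monomial_mul_mem_boundedSpan_image {p : MvPolynomial σ R} (hp : p ∈ m.boundedSpan G D)
    (e : σ →₀ ℕ) (c : R) : monomial e c * p ∈ m.boundedSpan G ((m.toSyn e + ·) '' D) := by
  induction hp using Submodule.span_induction with
  | mem p hp =>
    obtain ⟨g, hg, a, ha, rfl⟩ := hp
    rw [← mul_assoc, monomial_mul, mul_one]
    have hmem : m.toSyn (e + a + m.degree g) ∈ (m.toSyn e + ·) '' D :=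
      ⟨_, ha, by simp only [add_assoc, map_add]⟩
    exact monomial_mul_mem_boundedSpan hg hmem c
  | zero => simp
  | add p q _ _ hp hq => rw [mul_add]; exact add_mem hp hq
  | smul c' p _ hp => rw [mul_smul_comm]; exact Submodule.smul_mem _ c' hp

theorem mem_boundedSpan_univ_of_mem_ideal_span (hf : f ∈ Ideal.span G) :
    f ∈ m.boundedSpan G univ := by
  induction hf using Submodule.span_induction with
  | mem g hg => simpa using monomial_mul_mem_boundedSpan (m := m) hg (mem_univ _) (a := 0) 1
  | zero => exact zero_mem _
  | add p q _ _ hp hq => exact add_mem hp hq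
  | smul q p _ hp =>
    rw [smul_eq_mul]
    induction q using MvPolynomial.induction_on' with
    | monomial e c =>
      exact boundedSpan_mono (subset_univ _) (monomial_mul_mem_boundedSpan_image hp e c)
    | add q q' hq hq' => rw [add_mul]; exact add_mem hq hq'

theorem exists_mem_boundedSpan_Iic (hD : D.Nonempty) (hf : f ∈ m.boundedSpan G D) :
    ∃ d ∈ D, f ∈ m.boundedSpan G (Iic d) := by
  induction hf using Submodule.span_induction with
  | mem p hp =>
    obtain ⟨g, hg, a, ha, rfl⟩ := hp
    exact ⟨_, ha, Submodule.subset_span ⟨g, hg, a, le_rfl, rfl⟩⟩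
  | zero =>
    obtain ⟨d, hd⟩ := hD
    exact ⟨d, hd, zero_mem _⟩
  | add p q _ _ hp hq =>
    obtain ⟨d, hd, hpd⟩ := hp
    obtain ⟨d', hd', hqd'⟩ := hq
    rcases le_total d d' with h | h
    · exact ⟨d', hd', add_mem (boundedSpan_mono (Iic_subset_Iic.mpr h) hpd) hqd'⟩
    · exact ⟨d, hd, add_mem hpd (boundedSpan_mono (Iic_subset_Iic.mpr h) hqd')⟩
  | smul c p _ hp =>
    obtain ⟨d, hd, hpd⟩ := hp
    exact ⟨d, hd, Submodule.smul_mem _ c hpd⟩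

theorem exists_degree_le_of_mem_boundedSpan_Iic {μ : σ →₀ ℕ}
    (hf : f ∈ m.boundedSpan G (Iic (m.toSyn μ))) (hμ : μ ∈ f.support) :
    ∃ g ∈ G, g ≠ 0 ∧ m.degree g ≤ μ := by
  by_contra! h
  suffices m.boundedSpan G (Iic (m.toSyn μ)) ≤ LinearMap.ker (lcoeff R μ) from
    mem_support_iff.mp hμ (this hf)
  refine Submodule.span_le.mpr ?_
  rintro _ ⟨g, hg, a, ha, rfl⟩
  simp only [SetLike.mem_coe, LinearMap.mem_ker, lcoeff_apply, coeff_monomial_mul', one_mul]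
  split_ifs with haμ
  · by_contra hmem
    rw [← ne_eq, ← mem_support_iff] at hmem
    have hg0 : g ≠ 0 := by rintro rfl; simp at hmem
    have hle : m.toSyn (μ - a) ≤ m.toSyn (m.degree g) := m.le_degree hmem
    have hge : m.toSyn (m.degree g) ≤ m.toSyn (μ - a) := by
      rw [mem_Iic, ← add_tsub_cancel_of_le haμ, map_add, map_add] at ha
      exact le_of_add_le_add_left ha
    have heq : m.degree g = μ - a := m.toSyn.injective (le_antisymm hge hle)
    exact h g hg hg0 (heq ▸ tsub_le_self)
  · rfl

end CommSemiring

section Field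

variable {R : Type*} [Field R] {G : Set (MvPolynomial σ R)} {f : MvPolynomial σ R}

theorem toSyn_degree_cancel_leadingTerm_lt {g : MvPolynomial σ R} (hg : g ≠ 0)
    (hle : m.degree g ≤ m.degree f)
    (hr : f - (m.leadingCoeff f / m.leadingCoeff g) •
      (monomial (m.degree f - m.degree g) 1 * g) ≠ 0) :
    m.toSyn (m.degree (f - (m.leadingCoeff f / m.leadingCoeff g) •
      (monomial (m.degree f - m.degree g) 1 * g))) < m.toSyn (m.degree f) := by
  classical
  set r := f - (m.leadingCoeff f / m.leadingCoeff g) • (monomial (m.degree f - m.degree g) 1 * g)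
  have hle_r : m.toSyn (m.degree r) ≤ m.toSyn (m.degree f) := by
    rcases Finset.mem_union.mp (support_sub σ _ _ (m.degree_mem_support hr)) with h | h
    · exact m.le_degree h
    · have := toSyn_le_of_mem_support_monomial_mul (m := m) (Finsupp.support_smul h)
      rwa [tsub_add_cancel_of_le hle] at this
  have hcoeff : coeff (m.degree f) r = 0 := by
    rw [coeff_sub, coeff_smul, coeff_monomial_mul', if_pos tsub_le_self,
      tsub_tsub_cancel_of_le hle, one_mul, smul_eq_mul]
    exact sub_eq_zero.mpr (div_mul_cancel₀ _ (m.leadingCoeff_ne_zero_iff.mpr hg)).symm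
  refine hle_r.lt_of_ne fun h => ?_
  rw [← m.toSyn.injective h] at hcoeff
  exact m.coeff_degree_ne_zero_iff.mpr hr hcoeff

variable (m G) in
def SPolynomialsBelowLcm : Prop :=
  ∀ gi ∈ G, ∀ gj ∈ G,
    m.sPolynomial gi gj ∈ m.boundedSpan G (Iio (m.toSyn (m.degree gi ⊔ m.degree gj)))

theorem sPolynomial_monomial_mul_mem_boundedSpan (hS : m.SPolynomialsBelowLcm G)
    {gi gj : MvPolynomial σ R} (hgi : gi ∈ G) (hgj : gj ∈ G) {a b : σ →₀ ℕ} {d : m.syn}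
    (ha : m.toSyn (a + m.degree gi) = d) (hb : m.toSyn (b + m.degree gj) = d) (c c' : R) :
    m.sPolynomial (monomial a c * gi) (monomial b c' * gj) ∈ m.boundedSpan G (Iio d) := by
  have hab : a + m.degree gi = b + m.degree gj := m.toSyn.injective (ha.trans hb.symm)
  have hlcm : m.degree gi ⊔ m.degree gj ≤ b + m.degree gj :=
    sup_le (hab ▸ le_add_self) le_add_self
  rw [sPolynomial_monomial_mul, hab, sup_idem]
  refine boundedSpan_mono ?_ (monomial_mul_mem_boundedSpan_image (hS gi hgi gj hgj) _ _)
  rintro _ ⟨x, hx, rfl⟩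
  calc _ < m.toSyn (b + m.degree gj - m.degree gi ⊔ m.degree gj) +
        m.toSyn (m.degree gi ⊔ m.degree gj) := add_lt_add_right hx _
    _ = d := by rw [← map_add, tsub_add_cancel_of_le hlcm, hb]

theorem mem_boundedSpan_Iio_of_degree_lt (hS : m.SPolynomialsBelowLcm G) {d : m.syn}
    (hf : f ∈ m.boundedSpan G (Iic d)) (hfd : m.toSyn (m.degree f) < d) :
    f ∈ m.boundedSpan G (Iio d) := by
  rw [← Iio_union_right, boundedSpan_union] at hf
  obtain ⟨v, hv, w, hw, rfl⟩ := Submodule.mem_sup.mp hf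
  refine add_mem hv ?_
  have hf' : v + w ∈ restrictSupport R (m.toSyn ⁻¹' Iio d) :=
    fun ν hν => (m.le_degree hν).trans_lt hfd
  have hwd : m.toSyn (m.degree w) < d := toSyn_degree_lt_of_mem_restrictSupport
    (by simpa using sub_mem hf' (boundedSpan_le_restrictSupport (isLowerSet_Iio d) hv))
    ((m.zero_le _).trans_lt hfd)
  obtain ⟨n, c, q, rfl⟩ := Submodule.mem_span_set'.mp hw
  choose g hg a ha hq using fun i => (q i).2
  have hsum : ∑ i, c i • (q i : MvPolynomial σ R) = ∑ i, monomial (a i) (c i) * g i := by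
    refine Finset.sum_congr rfl fun i _ => ?_
    rw [hq i, ← smul_mul_assoc, smul_monomial, smul_eq_mul, mul_one]
  have htop : ∀ i ∈ Finset.univ, m.toSyn (m.degree (monomial (a i) (c i) * g i)) = d ∨
      monomial (a i) (c i) * g i = 0 := by
    intro i _
    by_cases hc : c i = 0
    · simp [hc]
    by_cases hg0 : g i = 0
    · simp [hg0]
    exact .inl (by rw [degree_monomial_mul hc hg0]; exact ha i)
  rw [hsum] at hwd ⊢
  -- the summands of degree exactly `d` cancel at the top
  obtain ⟨c', hc'⟩ := sPolynomial_decomposition' _ htop hwd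
  rw [hc']
  exact Submodule.sum_mem _ fun i _ => Submodule.sum_mem _ fun j _ => Submodule.smul_mem _ _
    (sPolynomial_monomial_mul_mem_boundedSpan hS (hg i) (hg j) (ha i) (ha j) _ _)

theorem mem_boundedSpan_Iic_degree (hS : m.SPolynomialsBelowLcm G) (hf : f ∈ Ideal.span G) :
    f ∈ m.boundedSpan G (Iic (m.toSyn (m.degree f))) := by
  obtain ⟨d, -, hfd⟩ :=
    exists_mem_boundedSpan_Iic univ_nonempty (mem_boundedSpan_univ_of_mem_ideal_span (m := m) hf)
  induction d using WellFoundedLT.induction with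
  | _ d ih =>
  rcases le_or_gt d (m.toSyn (m.degree f)) with hle | hlt
  · exact boundedSpan_mono (Iic_subset_Iic.mpr hle) hfd
  · obtain ⟨d', hd', hfd'⟩ := exists_mem_boundedSpan_Iic ⟨m.toSyn (m.degree f), hlt⟩
      (mem_boundedSpan_Iio_of_degree_lt hS hfd hlt)
    exact ih d' hd' hfd'

theorem exists_degree_le_of_mem_ideal_span (hS : m.SPolynomialsBelowLcm G)
    (hf : f ∈ Ideal.span G) (hf0 : f ≠ 0) : ∃ g ∈ G, g ≠ 0 ∧ m.degree g ≤ m.degree f :=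
  exists_degree_le_of_mem_boundedSpan_Iic (mem_boundedSpan_Iic_degree hS hf)
    (m.degree_mem_support hf0)

end Field

end MonomialOrder

theorem IsSPolynomial.mem_ideal {σ F : Type} [Field F] {ord : MonomialOrd σ}
    {f g s : MvPolynomial σ F} {I : Ideal (MvPolynomial σ F)} (hs : IsSPolynomial ord f g s)
    (hf : f ∈ I) (hg : g ∈ I) : s ∈ I := by
  obtain ⟨_, _, _, -, -, -, rfl⟩ := hs
  exact sub_mem (Submodule.smul_of_tower_mem _ _ (I.mul_mem_left _ hf))
    (Submodule.smul_of_tower_mem _ _ (I.mul_mem_left _ hg))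

namespace MonomialOrd

open MvPolynomial MonomialOrder Set

variable {σ F : Type} [Field F] [Finite σ] {ord : MonomialOrd σ}

theorem isLeadingMonomial_iff {f : MvPolynomial σ F} {μ : σ →₀ ℕ} :
    IsLeadingMonomial ord f μ ↔ f ≠ 0 ∧ ord.toMonomialOrder.degree f = μ := by
  constructor
  · rintro ⟨hμ, hmax⟩
    have hf : f ≠ 0 := by rintro rfl; simp at hμ
    exact ⟨hf, ord.le_antisymm _ _ (hmax _ (degree_mem_support hf))
      (le_degree (m := ord.toMonomialOrder) hμ)⟩
  · rintro ⟨hf, rfl⟩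
    exact ⟨degree_mem_support hf, fun ν hν => le_degree (m := ord.toMonomialOrder) hν⟩

theorem leadTermDvd_iff {f g : MvPolynomial σ F} :
    LeadTermDvd ord g f ↔ g ≠ 0 ∧ f ≠ 0 ∧
      ord.toMonomialOrder.degree g ≤ ord.toMonomialOrder.degree f := by
  simp only [LeadTermDvd, isLeadingMonomial_iff]
  constructor
  · rintro ⟨_, _, ⟨hg, rfl⟩, ⟨hf, rfl⟩, h⟩
    exact ⟨hg, hf, h⟩
  · rintro ⟨hg, hf, h⟩
    exact ⟨_, _, ⟨hg, rfl⟩, ⟨hf, rfl⟩, h⟩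

theorem isSPolynomial_inv_smul_sPolynomial {f g : MvPolynomial σ F} (hf : f ≠ 0) (hg : g ≠ 0) :
    IsSPolynomial ord f g ((ord.toMonomialOrder.leadingCoeff f *
      ord.toMonomialOrder.leadingCoeff g)⁻¹ • ord.toMonomialOrder.sPolynomial f g) := by
  set m := ord.toMonomialOrder
  have hlf : m.leadingCoeff f ≠ 0 := m.leadingCoeff_ne_zero_iff.mpr hf
  have hlg : m.leadingCoeff g ≠ 0 := m.leadingCoeff_ne_zero_iff.mpr hg
  refine ⟨m.degree f, m.degree g, m.degree f ⊔ m.degree g, isLeadingMonomial_iff.mpr ⟨hf, rfl⟩,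
    isLeadingMonomial_iff.mpr ⟨hg, rfl⟩, fun _ => rfl, ?_⟩
  have hmono : ∀ (e : σ →₀ ℕ) (c : F) (p : MvPolynomial σ F),
      monomial e c * p = c • (monomial e 1 * p) := fun e c p => by
    rw [← smul_mul_assoc, smul_monomial, smul_eq_mul, mul_one]
  rw [sPolynomial_def, hmono _ (m.leadingCoeff g), hmono _ (m.leadingCoeff f), smul_sub,
    smul_smul, smul_smul]
  congr 2 <;> · unfold MonomialOrder.leadingCoeff at *; field_simp

variable {G : Finset (MvPolynomial σ F)}

theorem mem_boundedSpan_of_reducesTo {D : Set ord.toMonomialOrder.syn} (hD : IsLowerSet D)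
    {f : MvPolynomial σ F} (hf : ReducesTo ord G f 0)
    (hfD : ↑f.support ⊆ ord.toMonomialOrder.toSyn ⁻¹' D) :
    f ∈ ord.toMonomialOrder.boundedSpan ↑G D := by
  classical
  induction hf using Relation.ReflTransGen.head_induction_on with
  | refl => exact zero_mem _
  | @head p _ hstep _ ih =>
    obtain ⟨g, hg, μ, hμ, μg, hgμ, hle, rfl⟩ := hstep
    obtain ⟨hg0, rfl⟩ := isLeadingMonomial_iff.mp hgμ
    have ht : (coeff μ p / coeff (ord.toMonomialOrder.degree g) g) •
        (monomial (μ - ord.toMonomialOrder.degree g) 1 * g) ∈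
          ord.toMonomialOrder.boundedSpan ↑G D :=
      Submodule.smul_mem _ _ (Submodule.subset_span
        ⟨g, hg, _, by rw [tsub_add_cancel_of_le hle]; exact hfD hμ, rfl⟩)
    refine sub_add_cancel p _ ▸ add_mem (ih fun ν hν => ?_) ht
    rcases Finset.mem_union.mp (support_sub σ _ _ hν) with h | h
    · exact hfD h
    · exact boundedSpan_le_restrictSupport hD ht h

theorem sPolynomialsBelowLcm_of_reducesTo
    (hS : ∀ gi ∈ G, ∀ gj ∈ G, gi ≠ gj → ∀ s, IsSPolynomial ord gi gj s → ReducesTo ord G s 0) :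
    ord.toMonomialOrder.SPolynomialsBelowLcm (G : Set (MvPolynomial σ F)) := by
  set m := ord.toMonomialOrder
  intro gi hgi gj hgj
  rcases eq_or_ne gi gj with rfl | hij
  · simp
  rcases eq_or_ne gi 0 with rfl | hi0
  · simp
  rcases eq_or_ne gj 0 with rfl | hj0
  · simp
  have hc : m.leadingCoeff gi * m.leadingCoeff gj ≠ 0 :=
    mul_ne_zero (m.leadingCoeff_ne_zero_iff.mpr hi0) (m.leadingCoeff_ne_zero_iff.mpr hj0)
  have hsupp : ↑((m.leadingCoeff gi * m.leadingCoeff gj)⁻¹ • m.sPolynomial gi gj).support ⊆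
      m.toSyn ⁻¹' Iio (m.toSyn (m.degree gi ⊔ m.degree gj)) := fun ν hν => by
    have hν' := Finsupp.support_smul hν
    rcases m.degree_sPolynomial gi gj with h | h
    · exact (m.le_degree hν').trans_lt h
    · simp [h] at hν'
  have hs := mem_boundedSpan_of_reducesTo (isLowerSet_Iio _)
    (hS gi hgi gj hgj hij _ (isSPolynomial_inv_smul_sPolynomial hi0 hj0)) hsupp
  have := Submodule.smul_mem _ (m.leadingCoeff gi * m.leadingCoeff gj) hs
  rwa [smul_smul, mul_inv_cancel₀ hc, one_smul] at this

theorem reducesTo_zero_of_mem_ideal_span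
    (hGB : ∀ f ∈ Ideal.span (G : Set (MvPolynomial σ F)), f ≠ 0 → ∃ g ∈ G, LeadTermDvd ord g f)
    {f : MvPolynomial σ F} (hf : f ∈ Ideal.span (G : Set (MvPolynomial σ F))) :
    ReducesTo ord G f 0 := by
  set m := ord.toMonomialOrder
  induction hd : m.toSyn (m.degree f) using WellFoundedLT.induction generalizing f with
  | _ d ih =>
  rcases eq_or_ne f 0 with rfl | hf0
  · exact .refl
  obtain ⟨g, hg, hdvd⟩ := hGB f hf hf0
  obtain ⟨hg0, -, hle⟩ := leadTermDvd_iff.mp hdvd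
  set r := f - (m.leadingCoeff f / m.leadingCoeff g) •
    (monomial (m.degree f - m.degree g) 1 * g)
  have hstep : ReduceStep ord g f r :=
    ⟨_, m.degree_mem_support hf0, _, isLeadingMonomial_iff.mpr ⟨hg0, rfl⟩, hle, rfl⟩
  have hr : r ∈ Ideal.span (G : Set (MvPolynomial σ F)) := sub_mem hf
    (Submodule.smul_of_tower_mem _ _ (Ideal.mul_mem_left _ _ (Ideal.subset_span hg)))
  refine .head ⟨g, hg, hstep⟩ ?_
  rcases eq_or_ne r 0 with hr0 | hr0
  · rw [hr0]
  · exact ih _ (hd ▸ toSyn_degree_cancel_leadingTerm_lt hg0 hle hr0) hr rfl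

end MonomialOrd

theorem buchberger_criterion_general {m : ℕ} {F : Type} [Field F] (ord : MonomialOrd (Fin m))
    (G : Finset (MvPolynomial (Fin m) F)) :
    (∀ gi ∈ G, ∀ gj ∈ G, gi ≠ gj → ∀ s, IsSPolynomial ord gi gj s →
      ReducesTo ord G s 0) ↔
    (∀ f ∈ Ideal.span (G : Set (MvPolynomial (Fin m) F)), f ≠ 0 →
      ∃ g ∈ G, LeadTermDvd ord g f) := by
  constructor
  · intro hS f hf hf0
    obtain ⟨g, hg, hg0, hle⟩ := MonomialOrder.exists_degree_le_of_mem_ideal_span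
      (MonomialOrd.sPolynomialsBelowLcm_of_reducesTo hS) hf hf0
    exact ⟨g, hg, MonomialOrd.leadTermDvd_iff.mpr ⟨hg0, hf0, hle⟩⟩
  · intro hGB gi hgi gj hgj _ s hs
    exact MonomialOrd.reducesTo_zero_of_mem_ideal_span hGB
      (hs.mem_ideal (Ideal.subset_span hgi) (Ideal.subset_span hgj))

/-- Buchberger's criterion: a finite set `G` of nonzero polynomials is a Gröbner
basis of the ideal it generates (for every nonzero `f ∈ ⟨G⟩` the leading term of
some `g ∈ G` divides the leading term of `f`) if and only if all S-polynomials
`S(gᵢ, gⱼ)` for `gᵢ ≠ gⱼ` in `G` reduce to `0` modulo `G`. -/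
theorem buchberger_criterion {m : ℕ} {F : Type} [Field F] (ord : MonomialOrd (Fin m))
    (G : Finset (MvPolynomial (Fin m) F)) (hG : ∀ g ∈ G, g ≠ 0) :
    (∀ gi ∈ G, ∀ gj ∈ G, gi ≠ gj → ∀ s, IsSPolynomial ord gi gj s →
      ReducesTo ord G s 0) ↔
    (∀ f ∈ Ideal.span (G : Set (MvPolynomial (Fin m) F)), f ≠ 0 →
      ∃ g ∈ G, LeadTermDvd ord g f) :=
  buchberger_criterion_general ord G
end
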